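/- (Infeasibility due to per-window normalization constraints, two channels with padding.) Let X : Fin 2 → Fin W → ℝ be a two-channel window with σ(X c) > 0 for each channel c, and let Z : Fin 2 → Fin p → ℝ be defined by Z c = P(N(X c)). Then for every ε > 0 there exists Ẑ : Fin 2 → Fin p → ℝ with sup over (c, j) of |Ẑ c j − Z c j| < ε such that for every X' : Fin 2 → Fin W → ℝ with σ(X' c) ≠ 0 for each c, Ẑ is not equal to the channelwise image c ↦ P(N(X' c)); hence Ẑ lies in the sup-norm ε-ball around Z but outside the feasible set of preprocessed inputs. -/

import Mathlib

/-- Sample mean of a window. -/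
noncomputable def sampleMean (W : ℕ) (x : Fin W → ℝ) : ℝ :=
  (∑ i, x i) / W

/-- Sample standard deviation of a window. -/
noncomputable def sampleStd (W : ℕ) (x : Fin W → ℝ) : ℝ :=
  Real.sqrt ((∑ i, (x i - sampleMean W x) ^ 2) / W)

/-- Per-window z-normalization. -/
noncomputable def znorm (W : ℕ) (x : Fin W → ℝ) : Fin W → ℝ :=
  fun i => (x i - sampleMean W x) / sampleStd W x

/-- Left-zero-padding of a window of length `W` to length `p ≥ W`. -/
def pad (W p : ℕ) (hWp : W ≤ p) (z : Fin W → ℝ) : Fin p → ℝ :=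
  fun j =>
    if h : (j : ℕ) < p - W then 0
    else z ⟨(j : ℕ) - (p - W), by have := j.isLt; omega⟩

/-! Every feasible channel `P (N x)` sums to zero: a z-normalized window has mean zero, and
padding only adds zeros. Shifting every coordinate of `Z` by `ε / 2` moves the sum of each
channel to `p ε / 2 ≠ 0`, so the shifted point is `ε`-close to `Z` but not feasible. -/

open Finset
open scoped BigOperators

lemma sampleMean_eq_expect (W : ℕ) (x : Fin W → ℝ) : sampleMean W x = 𝔼 i, x i := by
  rw [Fintype.expect_eq_sum_div_card, Fintype.card_fin, sampleMean]

lemma sum_znorm (W : ℕ) (x : Fin W → ℝ) : ∑ i, znorm W x i = 0 := by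
  have hcentered : ∑ i, (x i - sampleMean W x) = 0 := by
    simpa only [sampleMean_eq_expect, Fintype.balance_apply] using Fintype.sum_balance x
  simp only [znorm, ← sum_div, hcentered, zero_div]

lemma sum_pad (W p : ℕ) (hWp : W ≤ p) (z : Fin W → ℝ) :
    ∑ j, pad W p hWp z j = ∑ i, z i := by
  let shift : Fin W → Fin p := fun i => Fin.cast (by omega) (Fin.natAdd (p - W) i)
  refine (Fintype.sum_of_injective shift (fun i i' h => ?_) z _
    (fun j hj => ?_) (fun i => ?_)).symm
  · simpa [shift, Fin.ext_iff] using h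
  · have hlt : (j : ℕ) < p - W := by
      by_contra hge
      refine hj ⟨⟨j - (p - W), by omega⟩, Fin.ext ?_⟩
      simp only [shift, Fin.natAdd_mk, Fin.cast_mk]
      omega
    simp [pad, hlt]
  · simp [pad, shift]

lemma sum_pad_znorm (W p : ℕ) (hWp : W ≤ p) (x : Fin W → ℝ) :
    ∑ j, pad W p hWp (znorm W x) j = 0 := by
  rw [sum_pad, sum_znorm]

theorem preprocessed_ball_contains_infeasible_general (W p : ℕ) (hW : 2 ≤ W)
    (hWp : W ≤ p) (X : Fin 2 → Fin W → ℝ)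
    (Z : Fin 2 → Fin p → ℝ) (hZ : ∀ c, Z c = pad W p hWp (znorm W (X c)))
    (ε : ℝ) (hε : 0 < ε) :
    ∃ Zhat : Fin 2 → Fin p → ℝ,
      (∀ c j, |Zhat c j - Z c j| < ε) ∧
      ∀ X' : Fin 2 → Fin W → ℝ, (∀ c, sampleStd W (X' c) ≠ 0) →
        Zhat ≠ fun c => pad W p hWp (znorm W (X' c)) := by
  refine ⟨fun c j => Z c j + ε / 2, fun c j => ?_, fun X' _ hfeasible => ?_⟩
  · rw [add_sub_cancel_left, abs_of_pos (half_pos hε)]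
    exact half_lt_self hε
  · have hsum := congrArg (fun f => ∑ j, f j) (congrFun hfeasible 0)
    simp only [sum_add_distrib, sum_const, card_univ, Fintype.card_fin, nsmul_eq_mul, hZ,
      sum_pad_znorm, zero_add] at hsum
    have hp : (0 : ℝ) < p := by exact_mod_cast (show 0 < p by omega)
    exact (mul_pos hp (half_pos hε)).ne' hsum

/-- Infeasibility due to per-window normalization constraints (two channels
with padding): for every `ε > 0` there is a point `Ẑ` in the sup-norm
`ε`-ball around the preprocessed window `Z` that is not the preprocessed
image of any two-channel window. -/
theorem preprocessed_ball_contains_infeasible (W p : ℕ) (hW : 2 ≤ W)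
    (hWp : W ≤ p) (X : Fin 2 → Fin W → ℝ)
    (hσ : ∀ c, 0 < sampleStd W (X c))
    (Z : Fin 2 → Fin p → ℝ) (hZ : ∀ c, Z c = pad W p hWp (znorm W (X c)))
    (ε : ℝ) (hε : 0 < ε) :
    ∃ Zhat : Fin 2 → Fin p → ℝ,
      (∀ c j, |Zhat c j - Z c j| < ε) ∧
      ∀ X' : Fin 2 → Fin W → ℝ, (∀ c, sampleStd W (X' c) ≠ 0) →
        Zhat ≠ fun c => pad W p hWp (znorm W (X' c)) :=
  preprocessed_ball_contains_infeasible_general W p hW hWp X Z hZ ε hε
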